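/- The invariant Ocat(X, F_X) = inf { Ocat(X, A, F_X) : A ⋔ F_X } is a stratified homotopy invariant: if f : X → X' is a stratified map with a stratified homotopy inverse, then Ocat(X, F_X) = Ocat(X', F_{X'}). -/

import Mathlib

open unitInterval

/-- A stratified map: continuous and compatible with the equivalence relations. -/
def IsStratMap {X Y : Type} [TopologicalSpace X] [TopologicalSpace Y]
    (rX : X → X → Prop) (rY : Y → Y → Prop) (f : X → Y) : Prop :=
  Continuous f ∧ ∀ x x' : X, rX x x' → rY (f x) (f x')

/-- A stratified homotopy: `X × I` carries the product relation with `I` trivially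
stratified, i.e. `(x,t) ∼ (x',t') ↔ x ∼ x'`. -/
def IsStratHomotopy {X Y : Type} [TopologicalSpace X] [TopologicalSpace Y]
    (rX : X → X → Prop) (rY : Y → Y → Prop) (H : X × I → Y) : Prop :=
  Continuous H ∧ ∀ (x x' : X) (t t' : I), rX x x' → rY (H (x, t)) (H (x', t'))

/-- Two maps are `S`-homotopic if a stratified homotopy joins them. -/
def SHomotopic {X Y : Type} [TopologicalSpace X] [TopologicalSpace Y]
    (rX : X → X → Prop) (rY : Y → Y → Prop) (f g : X → Y) : Prop :=
  ∃ H : X × I → Y, IsStratHomotopy rX rY H ∧ (∀ x, H (x, 0) = f x) ∧ (∀ x, H (x, 1) = g x)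

/-- A stratified weak equivalence: a stratified map with a two-sided inverse up to
stratified homotopy. -/
def IsStratWeakEquiv {X Y : Type} [TopologicalSpace X] [TopologicalSpace Y]
    (rX : X → X → Prop) (rY : Y → Y → Prop) (f : X → Y) : Prop :=
  IsStratMap rX rY f ∧ ∃ g : Y → X, IsStratMap rY rX g ∧
    SHomotopic rY rY (f ∘ g) id ∧ SHomotopic rX rX (g ∘ f) id

/-- The stratified homotopy lifting property with respect to all stratified spaces
(topological spaces with an equivalence relation with path-connected classes). -/
def HasSHLP {E B : Type} [TopologicalSpace E] [TopologicalSpace B]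
    (rE : E → E → Prop) (rB : B → B → Prop) (p : E → B) : Prop :=
  ∀ (Z : Type) (_ : TopologicalSpace Z) (rZ : Z → Z → Prop), Equivalence rZ →
    (∀ z : Z, IsPathConnected {z' | rZ z z'}) →
    ∀ h : Z → E, IsStratMap rZ rE h →
    ∀ H : Z × I → B, IsStratHomotopy rZ rB H →
    (∀ z, H (z, 0) = p (h z)) →
    ∃ H' : Z × I → E, IsStratHomotopy rZ rE H' ∧
      (∀ z t, p (H' (z, t)) = H (z, t)) ∧ (∀ z, H' (z, 0) = h z)

/-- A stratified fibration. -/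
def IsStratFibration {E B : Type} [TopologicalSpace E] [TopologicalSpace B]
    (rE : E → E → Prop) (rB : B → B → Prop) (p : E → B) : Prop :=
  IsStratMap rE rB p ∧ HasSHLP rE rB p

/-- The stratified path space `Y^I_S`: continuous paths contained in a single stratum,
with the compact-open topology. -/
abbrev SPath (Y : Type) [TopologicalSpace Y] (rY : Y → Y → Prop) : Type :=
  {ω : C(I, Y) // ∀ t t' : I, rY (ω t) (ω t')}

/-- The stratification of the path space: two paths are equivalent iff they lie in the
same stratum. -/
def SPathRel {Y : Type} [TopologicalSpace Y] (rY : Y → Y → Prop)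
    (ω ω' : SPath Y rY) : Prop :=
  rY (ω.1 0) (ω'.1 0)

/-- The stratification induced on a subset `U`: strata are the connected components of
the intersections of `U` with the strata of `X`. -/
def relInduced {X : Type} [TopologicalSpace X] (rX : X → X → Prop) (U : Set X)
    (x x' : U) : Prop :=
  (x' : X) ∈ connectedComponentIn {y | y ∈ U ∧ rX (x : X) y} (x : X)

/-- A subset `U` is `A`-categorical: there is a stratified homotopy (for the induced
stratification on `U`) from the inclusion of `U` to a map with values in `A`. -/
def ACat {X : Type} [TopologicalSpace X] (rX : X → X → Prop) (A U : Set X) : Prop :=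
  ∃ H : U × I → X, IsStratHomotopy (relInduced rX U) rX H ∧
    (∀ x : U, H (x, 0) = x) ∧ (∀ x : U, H (x, 1) ∈ A)

/-- `X` is covered by `n+1` open `A`-categorical sets. -/
def OcatLe {X : Type} [TopologicalSpace X] (rX : X → X → Prop) (A : Set X) (n : ℕ) : Prop :=
  ∃ U : Fin (n + 1) → Set X, (∀ i, IsOpen (U i)) ∧ (∀ x, ∃ i, x ∈ U i) ∧
    ∀ i, ACat rX A (U i)

/-- The open LS-category `Ocat(X, A, F_X)` of a stratified pair, as an extended natural
number (`⊤` if no finite categorical cover exists). -/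
noncomputable def Ocat {X : Type} [TopologicalSpace X] (rX : X → X → Prop) (A : Set X) : ℕ∞ :=
  sInf {c : ℕ∞ | ∃ n : ℕ, c = (n : ℕ∞) ∧ OcatLe rX A n}

/-- The `n`-th fat wedge of the pair `(X, A)`. -/
def FatWedge {X : Type} (A : Set X) (n : ℕ) : Set (Fin (n + 1) → X) :=
  {x | ∃ k, x k ∈ A}

/-- The product stratification on `X^{n+1}`. -/
def relPi {X : Type} (rX : X → X → Prop) {n : ℕ} (x y : Fin (n + 1) → X) : Prop :=
  ∀ i, rX (x i) (y i)

/-- The diagonal factors up to stratified homotopy through the `n`-th fat wedge. -/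
def WhcatLe {X : Type} [TopologicalSpace X] (rX : X → X → Prop) (A : Set X) (n : ℕ) : Prop :=
  ∃ r : X → (Fin (n + 1) → X), IsStratMap rX (relPi rX) r ∧
    (∀ x, r x ∈ FatWedge A n) ∧ SHomotopic rX (relPi rX) (fun x _ => x) r

/-- The Whitehead LS-category of a stratified pair. -/
noncomputable def Whcat {X : Type} [TopologicalSpace X] (rX : X → X → Prop) (A : Set X) : ℕ∞ :=
  sInf {c : ℕ∞ | ∃ n : ℕ, c = (n : ℕ∞) ∧ WhcatLe rX A n}

/-- The `n`-th Ganea space of the pair `(X, A)`: `(n+1)`-tuples of stratified paths with a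
common endpoint, one of which starts in `A`. -/
def GaneaSet {X : Type} [TopologicalSpace X] (rX : X → X → Prop) (A : Set X) (n : ℕ) :
    Set (Fin (n + 1) → SPath X rX) :=
  {α | (∀ i, (α i).1 1 = (α 0).1 1) ∧ ∃ k, (α k).1 0 ∈ A}

/-- The stratification on the Ganea space, induced by the product of path-space
stratifications. -/
def relGanea {X : Type} [TopologicalSpace X] (rX : X → X → Prop) (A : Set X) (n : ℕ)
    (α β : GaneaSet rX A n) : Prop :=
  ∀ i, rX ((α.1 i).1 0) ((β.1 i).1 0)

/-- The `n`-th Ganea fibration `G_n(X,A,F_X) → X`. -/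
def ganeaMap {X : Type} [TopologicalSpace X] (rX : X → X → Prop) (A : Set X) (n : ℕ)
    (α : GaneaSet rX A n) : X := (α.1 0).1 1

/-- The `n`-th Ganea fibration admits a stratified section. -/
def GcatLe {X : Type} [TopologicalSpace X] (rX : X → X → Prop) (A : Set X) (n : ℕ) : Prop :=
  ∃ s : X → GaneaSet rX A n, IsStratMap rX (relGanea rX A n) s ∧
    ∀ x, ganeaMap rX A n (s x) = x

/-- The Ganea LS-category of a stratified pair. -/
noncomputable def Gcat {X : Type} [TopologicalSpace X] (rX : X → X → Prop) (A : Set X) : ℕ∞ :=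
  sInf {c : ℕ∞ | ∃ n : ℕ, c = (n : ℕ∞) ∧ GcatLe rX A n}

/-- The open LS-category of a stratified space: the infimum of `Ocat(X, A, F_X)` over all
subsets `A` transverse to the stratification (countable trace on each stratum). -/
noncomputable def OcatSpace {X : Type} [TopologicalSpace X] (rX : X → X → Prop) : ℕ∞ :=
  sInf {c : ℕ∞ | ∃ (n : ℕ) (A : Set X), c = (n : ℕ∞) ∧
    (∀ x : X, (A ∩ {y | rX x y}).Countable) ∧ OcatLe rX A n}


/-!
If `f : X → X'` has stratified homotopy inverse `g`, an open `A`-categorical cover `{U i}` of `X`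
pulls back to the open cover `{g⁻¹(U i)}` of `X'`, which is `f(A)`-categorical: deform a point
`y` to `f (g y)` by the homotopy `f ∘ g ≃ id` run backwards, then apply `f` to the deformation of
`g y` into `A`. Since `g ∘ f ≃ id` stratum-wise, `f` reflects strata, so `f(A)` meets each
stratum in the image of a countable set and stays transverse. Hence `OcatSpace rX' ≤ OcatSpace rX`,
and symmetrically.
-/

open unitInterval Set

section StratHomotopy

variable {W X Y Z : Type} [TopologicalSpace W] [TopologicalSpace X] [TopologicalSpace Y]
  [TopologicalSpace Z] {rW : W → W → Prop} {rX : X → X → Prop} {rY : Y → Y → Prop}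
  {rZ : Z → Z → Prop} {p q r : X → Y}

theorem SHomotopic.rel_apply (h : SHomotopic rX rY p q) {x : X} (hx : rX x x) :
    rY (p x) (q x) := by
  obtain ⟨H, hH, h0, h1⟩ := h
  simpa only [h0, h1] using hH.2 x x 0 1 hx

theorem SHomotopic.continuous_left (h : SHomotopic rX rY p q) : Continuous p := by
  obtain ⟨H, hH, h0, -⟩ := h
  have hp : p = fun x => H (x, 0) := funext fun x => (h0 x).symm
  exact hp ▸ hH.1.comp (by fun_prop)

theorem SHomotopic.continuous_right (h : SHomotopic rX rY p q) : Continuous q := by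
  obtain ⟨H, hH, -, h1⟩ := h
  have hq : q = fun x => H (x, 1) := funext fun x => (h1 x).symm
  exact hq ▸ hH.1.comp (by fun_prop)

theorem SHomotopic.symm (h : SHomotopic rX rY p q) : SHomotopic rX rY q p := by
  obtain ⟨H, hH, h0, h1⟩ := h
  refine ⟨fun z => H (z.1, σ z.2),
    ⟨hH.1.comp (by fun_prop), fun x x' t t' hx => hH.2 x x' _ _ hx⟩, ?_, ?_⟩
  · simpa only [symm_zero] using h1
  · simpa only [symm_one] using h0

theorem SHomotopic.trans (hY : Equivalence rY) (h₁ : SHomotopic rX rY p q)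
    (h₂ : SHomotopic rX rY q r) : SHomotopic rX rY p r := by
  have hp := h₁.continuous_left
  have hq := h₁.continuous_right
  have hr := h₂.continuous_right
  obtain ⟨H₁, hH₁, h₁0, h₁1⟩ := h₁
  obtain ⟨H₂, hH₂, h₂0, h₂1⟩ := h₂
  let F : ContinuousMap.Homotopy ⟨p, hp⟩ ⟨q, hq⟩ :=
    ⟨⟨fun s => H₁ (s.2, s.1), hH₁.1.comp (by fun_prop)⟩, h₁0, h₁1⟩
  let G : ContinuousMap.Homotopy ⟨q, hq⟩ ⟨r, hr⟩ :=
    ⟨⟨fun s => H₂ (s.2, s.1), hH₂.1.comp (by fun_prop)⟩, h₂0, h₂1⟩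
  -- `rX` need not be reflexive, so both halves are compared with `q` at the related points only.
  have hleft : ∀ x x' t, rX x x' → rY (F.trans G (t, x)) (q x') := by
    intro x x' t hx
    rw [ContinuousMap.Homotopy.trans_apply]
    split_ifs
    · rw [← h₁1 x']; exact hH₁.2 x x' _ 1 hx
    · rw [← h₂0 x']; exact hH₂.2 x x' _ 0 hx
  have hright : ∀ x x' t, rX x x' → rY (q x) (F.trans G (t, x')) := by
    intro x x' t hx
    rw [ContinuousMap.Homotopy.trans_apply]
    split_ifs
    · rw [← h₁1 x]; exact hH₁.2 x x' 1 _ hx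
    · rw [← h₂0 x]; exact hH₂.2 x x' 0 _ hx
  refine ⟨fun z => F.trans G (z.2, z.1), ⟨by fun_prop, fun x x' t t' hx => ?_⟩,
    (F.trans G).apply_zero, (F.trans G).apply_one⟩
  have hqq : rY (q x) (q x') := by rw [← h₁1 x, ← h₁1 x']; exact hH₁.2 x x' 1 1 hx
  exact hY.trans (hleft x x' t hx) (hY.trans (hY.symm hqq) (hright x x' t' hx))

theorem SHomotopic.comp_left {g : Y → Z} (hg : IsStratMap rY rZ g) (h : SHomotopic rX rY p q) :
    SHomotopic rX rZ (g ∘ p) (g ∘ q) := by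
  obtain ⟨H, hH, h0, h1⟩ := h
  exact ⟨g ∘ H, ⟨hg.1.comp hH.1, fun x x' t t' hx => hg.2 _ _ (hH.2 x x' t t' hx)⟩,
    fun x => congrArg g (h0 x), fun x => congrArg g (h1 x)⟩

theorem SHomotopic.comp_right {g : W → X} (hg : IsStratMap rW rX g) (h : SHomotopic rX rY p q) :
    SHomotopic rW rY (p ∘ g) (q ∘ g) := by
  obtain ⟨H, hH, h0, h1⟩ := h
  exact ⟨fun z => H (g z.1, z.2), ⟨hH.1.comp (by have := hg.1; fun_prop),
    fun x x' t t' hx => hH.2 _ _ t t' (hg.2 x x' hx)⟩, fun x => h0 (g x), fun x => h1 (g x)⟩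

theorem IsStratWeakEquiv.exists_symm {f : X → Y} (hf : IsStratWeakEquiv rX rY f) :
    ∃ g : Y → X, IsStratWeakEquiv rY rX g := by
  obtain ⟨hf, g, hg, hfg, hgf⟩ := hf
  exact ⟨g, hg, f, hf, hgf, hfg⟩

theorem rel_of_rel_map (hX : Equivalence rX) {f : X → Y} {g : Y → X} (hg : IsStratMap rY rX g)
    (hgf : SHomotopic rX rX (g ∘ f) id) {x x' : X} (h : rY (f x) (f x')) : rX x x' :=
  hX.trans (hX.symm (hgf.rel_apply (hX.refl x)))
    (hX.trans (hg.2 _ _ h) (hgf.rel_apply (hX.refl x')))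

end StratHomotopy

section Categorical

variable {X Y : Type} [TopologicalSpace X] [TopologicalSpace Y] {rX : X → X → Prop}
  {rY : Y → Y → Prop}

theorem isStratMap_subtype_val (U : Set X) : IsStratMap (relInduced rX U) rX Subtype.val :=
  ⟨continuous_subtype_val, fun _ _ h => (connectedComponentIn_subset _ _ h).2⟩

theorem IsStratMap.restrict_relInduced {g : X → Y} (hg : IsStratMap rX rY g) {U : Set X}
    {V : Set Y} (hUV : MapsTo g U V) :
    IsStratMap (relInduced rX U) (relInduced rY V) (hUV.restrict g U V) := by
  refine ⟨hg.1.restrict hUV, fun x x' h => ?_⟩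
  have hx : (x : X) ∈ {y | y ∈ U ∧ rX x y} := connectedComponentIn_nonempty_iff.1 ⟨_, h⟩
  refine connectedComponentIn_mono _ ?_ (hg.1.continuousOn.mapsTo_connectedComponentIn hx h)
  rintro _ ⟨y, ⟨hyU, hxy⟩, rfl⟩
  exact ⟨hUV hyU, hg.2 _ _ hxy⟩

theorem aCat_iff {A U : Set X} : ACat rX A U ↔
    ∃ c : U → X, SHomotopic (relInduced rX U) rX Subtype.val c ∧ ∀ x, c x ∈ A := by
  constructor
  · rintro ⟨H, hH, h0, h1⟩
    exact ⟨fun x => H (x, 1), ⟨H, hH, h0, fun _ => rfl⟩, h1⟩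
  · rintro ⟨c, ⟨H, hH, h0, h1⟩, hcA⟩
    exact ⟨H, hH, h0, fun x => h1 x ▸ hcA x⟩

variable {f : X → Y} {g : Y → X}

theorem ACat.preimage (hY : Equivalence rY) (hf : IsStratMap rX rY f) (hg : IsStratMap rY rX g)
    (hfg : SHomotopic rY rY (f ∘ g) id) {A U : Set X} (hU : ACat rX A U) :
    ACat rY (f '' A) (g ⁻¹' U) := by
  obtain ⟨c, hc, hcA⟩ := aCat_iff.1 hU
  have hgU : MapsTo g (g ⁻¹' U) U := mapsTo_preimage g U
  refine aCat_iff.2 ⟨f ∘ c ∘ hgU.restrict, ?_, fun y => mem_image_of_mem f (hcA _)⟩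
  exact (hfg.symm.comp_right (isStratMap_subtype_val _)).trans hY
    ((hc.comp_right (hg.restrict_relInduced hgU)).comp_left hf)

theorem OcatLe.image (hY : Equivalence rY) (hf : IsStratMap rX rY f) (hg : IsStratMap rY rX g)
    (hfg : SHomotopic rY rY (f ∘ g) id) {A : Set X} {n : ℕ} (h : OcatLe rX A n) :
    OcatLe rY (f '' A) n := by
  obtain ⟨U, hUo, hUcov, hUA⟩ := h
  exact ⟨fun i => g ⁻¹' U i, fun i => (hUo i).preimage hg.1, fun y => hUcov (g y),
    fun i => (hUA i).preimage hY hf hg hfg⟩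

theorem countable_image_inter_setOf_rel (hX : Equivalence rX) (hY : Equivalence rY)
    (hg : IsStratMap rY rX g) (hgf : SHomotopic rX rX (g ∘ f) id) {A : Set X}
    (hA : ∀ x, (A ∩ {x' | rX x x'}).Countable) (y : Y) :
    (f '' A ∩ {y' | rY y y'}).Countable := by
  rcases (f '' A ∩ {y' | rY y y'}).eq_empty_or_nonempty with h | ⟨_, ⟨a, -, rfl⟩, hya⟩
  · simp only [h, countable_empty]
  · refine ((hA a).image f).mono ?_
    rintro _ ⟨⟨b, hbA, rfl⟩, hyb⟩
    exact ⟨b, ⟨hbA, rel_of_rel_map hX hg hgf (hY.trans (hY.symm hya) hyb)⟩, rfl⟩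

theorem ocatSpace_le_of_isStratWeakEquiv (hX : Equivalence rX) (hY : Equivalence rY)
    (hf : IsStratWeakEquiv rX rY f) : OcatSpace rY ≤ OcatSpace rX := by
  obtain ⟨hf, g, hg, hfg, hgf⟩ := hf
  refine sInf_le_sInf ?_
  rintro _ ⟨n, A, rfl, hA, hAn⟩
  exact ⟨n, f '' A, rfl, countable_image_inter_setOf_rel hX hY hg hgf hA, hAn.image hY hf hg hfg⟩

end Categorical

theorem ocatSpace_homotopy_invariant_general {X X' : Type}
    [TopologicalSpace X] [TopologicalSpace X']
    (rX : X → X → Prop) (rX' : X' → X' → Prop)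
    (hX : Equivalence rX) (hX' : Equivalence rX')
    (f : X → X') (hfwe : IsStratWeakEquiv rX rX' f) :
    OcatSpace rX = OcatSpace rX' := by
  obtain ⟨g, hg⟩ := hfwe.exists_symm
  exact le_antisymm (ocatSpace_le_of_isStratWeakEquiv hX' hX hg)
    (ocatSpace_le_of_isStratWeakEquiv hX hX' hfwe)

/-- `Ocat(X, F_X)` is a stratified homotopy invariant. -/
theorem ocatSpace_homotopy_invariant {X X' : Type}
    [TopologicalSpace X] [TopologicalSpace X']
    (rX : X → X → Prop) (rX' : X' → X' → Prop)
    (hX : Equivalence rX) (hX' : Equivalence rX')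
    (hpcX : ∀ x : X, IsPathConnected {y | rX x y})
    (hpcX' : ∀ x : X', IsPathConnected {y | rX' x y})
    (f : X → X') (hfwe : IsStratWeakEquiv rX rX' f) :
    OcatSpace rX = OcatSpace rX' :=
  ocatSpace_homotopy_invariant_general rX rX' hX hX' f hfwe
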